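/- Let m and h be vector spaces with bilinear maps φ: m⊗m→m, θ: m⊗m→h, μ: h⊗h→h, γ: h⊗h→m, varφ: h⊗m→m, ψ: h⊗m→h, and define on g := m ⊕ h the bracket [ξ+Z, ξ'+Z'] = (φ(ξ,ξ') + varφ(Z,ξ') − varφ(Z',ξ) + γ(Z,Z')) + (μ(Z,Z') + ψ(Z,ξ') − ψ(Z',ξ) + θ(ξ,ξ')). Then g is a Lie algebra if and only if the following hold for all ξ,ξ',ξ'' ∈ m and Z,Z',Z'' ∈ h: (1) φ, θ, γ, μ vanish on diagonal pairs; (2) varφ(Z, φ(ξ,ξ')) = φ(varφ(Z,ξ),ξ') + φ(ξ,varφ(Z,ξ')) + varφ(ψ(Z,ξ),ξ') − varφ(ψ(Z,ξ'),ξ) + γ(θ(ξ,ξ'),Z); (3) μ(Z,θ(ξ,ξ')) = θ(varφ(Z,ξ),ξ') + θ(ξ,varφ(Z,ξ')) + ψ(ψ(Z,ξ),ξ') − ψ(ψ(Z,ξ'),ξ) − ψ(Z,φ(ξ,ξ')); (4) varφ(μ(Z,Z'),ξ) = varφ(Z,varφ(Z',ξ)) − varφ(Z',varφ(Z,ξ))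 + γ(ψ(Z,ξ),Z') + γ(Z,ψ(Z',ξ)) − φ(γ(Z,Z'),ξ); (5) ψ(μ(Z,Z'),ξ) = μ(Z,ψ(Z',ξ)) + μ(ψ(Z,ξ),Z') + ψ(Z,varφ(Z',ξ)) − ψ(Z',varφ(Z,ξ)) − θ(γ(Z,Z'),ξ); (6) the cyclic sum over (ξ,ξ',ξ'') of φ(φ(ξ,ξ'),ξ'') + varφ(θ(ξ,ξ'),ξ'') vanishes; (7) the cyclic sum of ψ(θ(ξ,ξ'),ξ'') + θ(φ(ξ,ξ'),ξ'') vanishes; (8) the cyclic sum over (Z,Z',Z'') of γ(μ(Z,Z'),Z'') − varφ(Z,γ(Z',Z'')) vanishes; (9) the cyclic sum of μ(μ(Z,Z'),Z'') − ψ(Z,γ(Z',Z'')) vanishes. -/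
import Mathlib


/-- The compatibility conditions making `(m, h)` a bicocycle matched pair. -/
def BicocycleMatchedPair
    {k : Type*} [Field k] {m h : Type*}
    [AddCommGroup m] [Module k m] [AddCommGroup h] [Module k h]
    (phi : m →ₗ[k] m →ₗ[k] m) (th : m →ₗ[k] m →ₗ[k] h)
    (mu : h →ₗ[k] h →ₗ[k] h) (gam : h →ₗ[k] h →ₗ[k] m)
    (vphi : h →ₗ[k] m →ₗ[k] m) (psi : h →ₗ[k] m →ₗ[k] h) : Prop :=
  -- (1) vanishing on diagonal pairs
  (∀ ξ : m, phi ξ ξ = 0) ∧ (∀ ξ : m, th ξ ξ = 0) ∧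
  (∀ Z : h, gam Z Z = 0) ∧ (∀ Z : h, mu Z Z = 0) ∧
  -- (2)
  (∀ (Z : h) (ξ ξ' : m), vphi Z (phi ξ ξ') =
    phi (vphi Z ξ) ξ' + phi ξ (vphi Z ξ') + vphi (psi Z ξ) ξ'
      - vphi (psi Z ξ') ξ + gam (th ξ ξ') Z) ∧
  -- (3)
  (∀ (Z : h) (ξ ξ' : m), mu Z (th ξ ξ') =
    th (vphi Z ξ) ξ' + th ξ (vphi Z ξ') + psi (psi Z ξ) ξ'
      - psi (psi Z ξ') ξ - psi Z (phi ξ ξ')) ∧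
  -- (4)
  (∀ (Z Z' : h) (ξ : m), vphi (mu Z Z') ξ =
    vphi Z (vphi Z' ξ) - vphi Z' (vphi Z ξ) + gam (psi Z ξ) Z'
      + gam Z (psi Z' ξ) - phi (gam Z Z') ξ) ∧
  -- (5)
  (∀ (Z Z' : h) (ξ : m), psi (mu Z Z') ξ =
    mu Z (psi Z' ξ) + mu (psi Z ξ) Z' + psi Z (vphi Z' ξ)
      - psi Z' (vphi Z ξ) - th (gam Z Z') ξ) ∧
  -- (6)
  (∀ ξ ξ' ξ'' : m,
    phi (phi ξ ξ') ξ'' + phi (phi ξ' ξ'') ξ + phi (phi ξ'' ξ) ξ'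
      + vphi (th ξ ξ') ξ'' + vphi (th ξ' ξ'') ξ + vphi (th ξ'' ξ) ξ' = 0) ∧
  -- (7)
  (∀ ξ ξ' ξ'' : m,
    psi (th ξ ξ') ξ'' + psi (th ξ' ξ'') ξ + psi (th ξ'' ξ) ξ'
      + th (phi ξ ξ') ξ'' + th (phi ξ' ξ'') ξ + th (phi ξ'' ξ) ξ' = 0) ∧
  -- (8)
  (∀ Z Z' Z'' : h,
    gam (mu Z Z') Z'' + gam (mu Z' Z'') Z + gam (mu Z'' Z) Z'
      - (vphi Z (gam Z' Z'') + vphi Z' (gam Z'' Z) + vphi Z'' (gam Z Z')) = 0) ∧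
  -- (9)
  (∀ Z Z' Z'' : h,
    mu (mu Z Z') Z'' + mu (mu Z' Z'') Z + mu (mu Z'' Z) Z'
      - (psi Z (gam Z' Z'') + psi Z' (gam Z'' Z) + psi Z'' (gam Z Z')) = 0)

/-- The bicocycle double cross sum bracket on `g = m ⊕ h` makes `g` a Lie
algebra (i.e. the bracket, which is bilinear by construction, is alternating and
satisfies the Jacobi identity) if and only if `(m, h)` is a bicocycle matched pair. -/
theorem bicocycle_double_cross_sum_lie_iff
    (k : Type*) [Field k] (hchar : (2 : k) ≠ 0) (m h : Type*)
    [AddCommGroup m] [Module k m] [AddCommGroup h] [Module k h]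
    (phi : m →ₗ[k] m →ₗ[k] m) (th : m →ₗ[k] m →ₗ[k] h)
    (mu : h →ₗ[k] h →ₗ[k] h) (gam : h →ₗ[k] h →ₗ[k] m)
    (vphi : h →ₗ[k] m →ₗ[k] m) (psi : h →ₗ[k] m →ₗ[k] h)
    (B : (m × h) → (m × h) → (m × h))
    (hB : ∀ p q : m × h, B p q =
      (phi p.1 q.1 + vphi p.2 q.1 - vphi q.2 p.1 + gam p.2 q.2,
       mu p.2 q.2 + psi p.2 q.1 - psi q.2 p.1 + th p.1 q.1)) :
    ((∀ v : m × h, B v v = 0) ∧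
     (∀ u v w : m × h, B (B u v) w + B (B v w) u + B (B w u) v = 0)) ↔
      BicocycleMatchedPair phi th mu gam vphi psi := by
  constructor
  · rintro ⟨halt, hjac⟩
    have k1 : ∀ ξ : m, phi ξ ξ = 0 := by
      intro ξ
      have := halt (ξ, 0)
      rw [hB] at this
      simp only [map_zero, LinearMap.zero_apply, add_zero, sub_zero, zero_add,
        Prod.mk_eq_zero, sub_self] at this
      exact this.1
    have k2 : ∀ ξ : m, th ξ ξ = 0 := by
      intro ξ
      have := halt (ξ, 0)
      rw [hB] at this
      simp only [map_zero, LinearMap.zero_apply, add_zero, sub_zero, zero_add,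
        Prod.mk_eq_zero, sub_self] at this
      exact this.2
    have k3 : ∀ Z : h, gam Z Z = 0 := by
      intro Z
      have := halt (0, Z)
      rw [hB] at this
      simp only [map_zero, LinearMap.zero_apply, add_zero, sub_zero, zero_add,
        Prod.mk_eq_zero, sub_self] at this
      exact this.1
    have k4 : ∀ Z : h, mu Z Z = 0 := by
      intro Z
      have := halt (0, Z)
      rw [hB] at this
      simp only [map_zero, LinearMap.zero_apply, add_zero, sub_zero, zero_add,
        Prod.mk_eq_zero, sub_self] at this
      exact this.2
    have phisk : ∀ x y : m, phi x y = - phi y x := by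
      intro x y
      have hh := k1 (x + y)
      simp only [map_add, LinearMap.add_apply, k1] at hh
      linear_combination (norm := abel) hh
    have thsk : ∀ x y : m, th x y = - th y x := by
      intro x y
      have hh := k2 (x + y)
      simp only [map_add, LinearMap.add_apply, k2] at hh
      linear_combination (norm := abel) hh
    have gamsk : ∀ x y : h, gam x y = - gam y x := by
      intro x y
      have hh := k3 (x + y)
      simp only [map_add, LinearMap.add_apply, k3] at hh
      linear_combination (norm := abel) hh
    have musk : ∀ x y : h, mu x y = - mu y x := by
      intro x y
      have hh := k4 (x + y)
      simp only [map_add, LinearMap.add_apply, k4] at hh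
      linear_combination (norm := abel) hh
    refine ⟨k1, k2, k3, k4, ?_, ?_, ?_, ?_, ?_, ?_, ?_, ?_⟩
    · intro Z x y
      have J := hjac (x, 0) (y, 0) (0, Z)
      simp only [hB, map_zero, LinearMap.zero_apply, map_add, map_sub, map_neg,
        LinearMap.add_apply, LinearMap.sub_apply, LinearMap.neg_apply,
        add_zero, sub_zero, zero_add, zero_sub, neg_zero, Prod.mk_add_mk, Prod.mk_eq_zero] at J
      obtain ⟨J1, J2⟩ := J
      linear_combination (norm := abel) -J1 - phisk x (vphi Z y)
    · intro Z x y
      have J := hjac (x, 0) (y, 0) (0, Z)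
      simp only [hB, map_zero, LinearMap.zero_apply, map_add, map_sub, map_neg,
        LinearMap.add_apply, LinearMap.sub_apply, LinearMap.neg_apply,
        add_zero, sub_zero, zero_add, zero_sub, neg_zero, Prod.mk_add_mk, Prod.mk_eq_zero] at J
      obtain ⟨J1, J2⟩ := J
      linear_combination (norm := abel) -J2 - thsk x (vphi Z y) + musk (th x y) Z
    · intro X Y z
      have J := hjac (0, X) (0, Y) (z, 0)
      simp only [hB, map_zero, LinearMap.zero_apply, map_add, map_sub, map_neg,
        LinearMap.add_apply, LinearMap.sub_apply, LinearMap.neg_apply,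
        add_zero, sub_zero, zero_add, zero_sub, neg_zero, Prod.mk_add_mk, Prod.mk_eq_zero] at J
      obtain ⟨J1, J2⟩ := J
      linear_combination (norm := abel) J1 - gamsk X (psi Y z)
    · intro X Y z
      have J := hjac (0, X) (0, Y) (z, 0)
      simp only [hB, map_zero, LinearMap.zero_apply, map_add, map_sub, map_neg,
        LinearMap.add_apply, LinearMap.sub_apply, LinearMap.neg_apply,
        add_zero, sub_zero, zero_add, zero_sub, neg_zero, Prod.mk_add_mk, Prod.mk_eq_zero] at J
      obtain ⟨J1, J2⟩ := J
      linear_combination (norm := abel) J2 - musk X (psi Y z)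
    · intro x y z
      have J := hjac (x, 0) (y, 0) (z, 0)
      simp only [hB, map_zero, LinearMap.zero_apply, map_add, map_sub, map_neg,
        LinearMap.add_apply, LinearMap.sub_apply, LinearMap.neg_apply,
        add_zero, sub_zero, zero_add, zero_sub, neg_zero, Prod.mk_add_mk, Prod.mk_eq_zero] at J
      obtain ⟨J1, J2⟩ := J
      linear_combination (norm := abel) J1
    · intro x y z
      have J := hjac (x, 0) (y, 0) (z, 0)
      simp only [hB, map_zero, LinearMap.zero_apply, map_add, map_sub, map_neg,
        LinearMap.add_apply, LinearMap.sub_apply, LinearMap.neg_apply,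
        add_zero, sub_zero, zero_add, zero_sub, neg_zero, Prod.mk_add_mk, Prod.mk_eq_zero] at J
      obtain ⟨J1, J2⟩ := J
      linear_combination (norm := abel) J2
    · intro X Y W
      have J := hjac (0, X) (0, Y) (0, W)
      simp only [hB, map_zero, LinearMap.zero_apply, map_add, map_sub, map_neg,
        LinearMap.add_apply, LinearMap.sub_apply, LinearMap.neg_apply,
        add_zero, sub_zero, zero_add, zero_sub, neg_zero, Prod.mk_add_mk, Prod.mk_eq_zero] at J
      obtain ⟨J1, J2⟩ := J
      linear_combination (norm := abel) J1
    · intro X Y W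
      have J := hjac (0, X) (0, Y) (0, W)
      simp only [hB, map_zero, LinearMap.zero_apply, map_add, map_sub, map_neg,
        LinearMap.add_apply, LinearMap.sub_apply, LinearMap.neg_apply,
        add_zero, sub_zero, zero_add, zero_sub, neg_zero, Prod.mk_add_mk, Prod.mk_eq_zero] at J
      obtain ⟨J1, J2⟩ := J
      linear_combination (norm := abel) J2
  · rintro ⟨k1, k2, k3, k4, k5, k6, k7, k8, k9, k10, k11, k12⟩
    have phisk : ∀ x y : m, phi x y = - phi y x := by
      intro x y
      have hh := k1 (x + y)
      simp only [map_add, LinearMap.add_apply, k1] at hh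
      linear_combination (norm := abel) hh
    have thsk : ∀ x y : m, th x y = - th y x := by
      intro x y
      have hh := k2 (x + y)
      simp only [map_add, LinearMap.add_apply, k2] at hh
      linear_combination (norm := abel) hh
    have gamsk : ∀ x y : h, gam x y = - gam y x := by
      intro x y
      have hh := k3 (x + y)
      simp only [map_add, LinearMap.add_apply, k3] at hh
      linear_combination (norm := abel) hh
    have musk : ∀ x y : h, mu x y = - mu y x := by
      intro x y
      have hh := k4 (x + y)
      simp only [map_add, LinearMap.add_apply, k4] at hh
      linear_combination (norm := abel) hh
    constructor
    · rintro ⟨ξ, Z⟩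
      rw [hB]
      simp [k1, k2, k3, k4]
    · rintro ⟨a, A⟩ ⟨b, B⟩ ⟨c, C⟩
      simp only [hB, map_add, map_sub, map_neg, LinearMap.add_apply,
        LinearMap.sub_apply, LinearMap.neg_apply, Prod.mk_add_mk, Prod.mk_eq_zero]
      refine ⟨?_, ?_⟩
      · linear_combination (norm := abel) -(k5 C a b) - k5 A b c - k5 B c a
          + k7 A B c + k7 B C a + k7 C A b + k9 a b c + k11 A B C
          - phisk a (vphi C b) - phisk b (vphi A c) - phisk c (vphi B a)
          + gamsk A (psi B c) + gamsk B (psi C a) + gamsk C (psi A b)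
      · linear_combination (norm := abel) -(k6 C a b) - k6 A b c - k6 B c a
          + k8 A B c + k8 B C a + k8 C A b + k10 a b c + k12 A B C
          - thsk a (vphi C b) - thsk b (vphi A c) - thsk c (vphi B a)
          + musk A (psi B c) + musk B (psi C a) + musk C (psi A b)
          + musk (th a b) C + musk (th b c) A + musk (th c a) B
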